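/- Let 𝔥 be a complex Hilbert space, 𝒫 and ℛ anti-commuting unitary involutions on 𝔥 (𝒫ℛ = −ℛ𝒫), and 𝒯 a conjugation on 𝔥 with 𝒫𝒯 = 𝒯𝒫 and ℛ𝒯 = 𝒯ℛ. Let H be a closed densely defined 𝒫𝒯-symmetric operator on 𝔥, and let J = α₁·𝒫 + α₂·ℛ + α₃·(iℛ𝒫) with α₁, α₂, α₃ ∈ ℝ, α₁² + α₂² + α₃² = 1 and α₁² + α₃² ≠ 0. Suppose J maps D(H) into D(H*) and J(Hf) = H*(Jf) for all f ∈ D(H). Then, for ξ ∈ [0,2π) determined by cos ξ = α₁/√(1−α₂²) and sin ξ = α₃/√(1−α₂²), the operator 𝒫_ξ := exp(iξℛ)𝒫 satisfies: 𝒫_ξ maps D(H) into D(H*) and 𝒫_ξ(Hf) = H*(𝒫_ξ f) for all f ∈ D(H). -/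

import Mathlib

/-!
Write `𝒞 = 𝒫𝒯`, an antiunitary involution. Conjugation by `𝒞` fixes `𝒫` and `iℛ𝒫` but
reverses `ℛ`, so `J + 𝒞J𝒞 = 2(α₁𝒫 + α₃ iℛ𝒫)`, and since `ℛ² = 1` gives
`exp(iξℛ) = cos ξ + i sin ξ ℛ`, this is `2√(1 - α₂²) 𝒫_ξ`. From `𝒞H ⊆ H𝒞` one gets
`𝒞H* ⊆ H*𝒞`, hence `𝒞J𝒞 H ⊆ 𝒞J H 𝒞 ⊆ 𝒞H* J𝒞 ⊆ H* 𝒞J𝒞`; adding `JH ⊆ H*J` gives the claim.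
-/

open scoped InnerProductSpace Real Nat

theorem NormedSpace.exp_I_mul_smul_of_mul_self_eq_one {A : Type*} [NormedRing A]
    [NormedAlgebra ℂ A] [CompleteSpace A] {r : A} (hr : r * r = 1) (z : ℂ) :
    exp ((Complex.I * z) • r) = Complex.cos z • 1 + (Complex.I * Complex.sin z) • r := by
  set x := (Complex.I * z) • r
  have hr2 : r ^ 2 = 1 := by rw [sq, hr]
  have even_pow (k : ℕ) : x ^ (2 * k) = ((-1) ^ k * z ^ (2 * k)) • 1 := by
    rw [smul_pow, pow_mul r, hr2, one_pow, mul_pow, pow_mul Complex.I, Complex.I_sq]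
  have odd_pow (k : ℕ) : x ^ (2 * k + 1) = (Complex.I * ((-1) ^ k * z ^ (2 * k + 1))) • r := by
    rw [smul_pow, pow_succ r, pow_mul r, hr2, one_pow, one_mul, mul_pow, pow_succ Complex.I,
      pow_mul Complex.I, Complex.I_sq]
    ring_nf
  have hcos : HasSum (fun k ↦ ((2 * k)! : ℂ)⁻¹ • x ^ (2 * k)) (Complex.cos z • 1) := by
    convert (Complex.hasSum_cos z).smul_const (1 : A) using 2 with k
    rw [even_pow, smul_smul, div_eq_inv_mul]
  have hsin : HasSum (fun k ↦ ((2 * k + 1)! : ℂ)⁻¹ • x ^ (2 * k + 1))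
      ((Complex.I * Complex.sin z) • r) := by
    convert ((Complex.hasSum_sin z).mul_left Complex.I).smul_const r using 2 with k
    rw [odd_pow, smul_smul]
    ring_nf
  exact (exp_series_hasSum_exp' x).unique (hcos.even_add_odd hsin)

namespace LinearPMap

variable {𝕜 E : Type*} [RCLike 𝕜] [NormedAddCommGroup E] [InnerProductSpace 𝕜 E]

/-- `X A ⊆ B X`, in the sense that `X` maps `A.domain` into `B.domain` and `X (A f) = B (X f)`. -/
def Intertwines (X : E → E) (A B : E →ₗ.[𝕜] E) : Prop :=
  ∀ f : A.domain, ∃ hf : X f ∈ B.domain, X (A f) = B ⟨X f, hf⟩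

namespace Intertwines

variable {X Y : E → E} {A B C : E →ₗ.[𝕜] E}

theorem comp (hX : Intertwines X A B) (hY : Intertwines Y B C) : Intertwines (Y ∘ X) A C := by
  intro f
  obtain ⟨hXf, hXA⟩ := hX f
  obtain ⟨hYXf, hYB⟩ := hY ⟨X f, hXf⟩
  exact ⟨hYXf, by simp only [Function.comp_apply, hXA, hYB]⟩

theorem add (hX : Intertwines X A B) (hY : Intertwines Y A B) : Intertwines (X + Y) A B := by
  intro f
  obtain ⟨hXf, hXA⟩ := hX f
  obtain ⟨hYf, hYA⟩ := hY f
  refine ⟨add_mem hXf hYf, ?_⟩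
  rw [Pi.add_apply, hXA, hYA, ← map_add]
  rfl

theorem const_smul (c : 𝕜) (hX : Intertwines X A B) : Intertwines (c • X) A B := by
  intro f
  obtain ⟨hXf, hXA⟩ := hX f
  refine ⟨Submodule.smul_mem _ c hXf, ?_⟩
  rw [Pi.smul_apply, hXA, ← LinearPMap.map_smul]
  rfl

theorem adjoint [CompleteSpace E] {C : E → E} (hC2 : ∀ x, C (C x) = x)
    (hC : ∀ u v, ⟪C u, C v⟫_𝕜 = ⟪v, u⟫_𝕜) (hA : Dense (A.domain : Set E))
    (hB : Dense (B.domain : Set E)) (h : Intertwines C A B) :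
    Intertwines C B.adjoint A.adjoint := by
  have swap (u v : E) : ⟪C u, v⟫_𝕜 = ⟪C v, u⟫_𝕜 := by rw [← hC, hC2]
  intro y
  have key (x : A.domain) : ⟪C (B.adjoint y), x⟫_𝕜 = ⟪C y, A x⟫_𝕜 := by
    obtain ⟨hCx, hCA⟩ := h x
    calc ⟪C (B.adjoint y), x⟫_𝕜 = ⟪C x, B.adjoint y⟫_𝕜 := swap _ _
      _ = ⟪B ⟨C x, hCx⟩, y⟫_𝕜 := by
          rw [← inner_conj_symm, adjoint_isFormalAdjoint hB y ⟨C x, hCx⟩, inner_conj_symm]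
      _ = ⟪C y, A x⟫_𝕜 := by rw [← hCA, swap]
  have hy : C y ∈ A.adjoint.domain := mem_adjoint_domain_of_exists _ ⟨_, key⟩
  exact ⟨hy, (adjoint_apply_eq hA ⟨C y, hy⟩ key).symm⟩

end Intertwines

end LinearPMap

theorem add_PT_conj_apply_eq {E : Type*} [NormedAddCommGroup E] [InnerProductSpace ℂ E]
    {P R J : E →L[ℂ] E} {T : E → E} (hP2 : ∀ f, P (P f) = f) (hanti : P ∘L R = -(R ∘L P))
    (hTadd : ∀ f g, T (f + g) = T f + T g)
    (hTsmul : ∀ (c : ℂ) (f : E), T (c • f) = (starRingEnd ℂ c) • T f) (hT2 : ∀ f, T (T f) = f)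
    (hPT : ∀ f, P (T f) = T (P f)) (hRT : ∀ f, R (T f) = T (R f)) {α₁ α₂ α₃ : ℝ}
    (hJ : J = (α₁ : ℂ) • P + (α₂ : ℂ) • R + (α₃ : ℂ) • (Complex.I • (R ∘L P))) (x : E) :
    J x + P (T (J (P (T x)))) = (2 * α₁ : ℂ) • P x + (2 * α₃ * Complex.I : ℂ) • R (P x) := by
  have hPR (y : E) : P (R y) = -R (P y) := by simpa using congr($hanti y)
  subst hJ
  simp only [add_apply, smul_apply, ContinuousLinearMap.comp_apply, hP2, hTadd, hTsmul, map_add,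
    map_smul, ← hRT, ← hPT, hT2, Complex.conj_ofReal, Complex.conj_I, hPR, map_neg, smul_neg,
    neg_smul, neg_neg]
  module

theorem krein_selfAdjoint_reduction_to_Pxi_general
    {𝕳 : Type*} [NormedAddCommGroup 𝕳] [InnerProductSpace ℂ 𝕳] [CompleteSpace 𝕳]
    (P R : 𝕳 →L[ℂ] 𝕳)
    (hP2 : ∀ f, P (P f) = f)
    (hPinner : ∀ f g : 𝕳, ⟪P f, P g⟫_ℂ = ⟪f, g⟫_ℂ)
    (hR2 : ∀ f, R (R f) = f)
    (hanti : P ∘L R = -(R ∘L P))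
    (T : 𝕳 → 𝕳)
    (hTadd : ∀ f g, T (f + g) = T f + T g)
    (hTsmul : ∀ (c : ℂ) (f : 𝕳), T (c • f) = (starRingEnd ℂ c) • T f)
    (hT2 : ∀ f, T (T f) = f)
    (hTinner : ∀ f g : 𝕳, ⟪T f, T g⟫_ℂ = ⟪g, f⟫_ℂ)
    (hPT : ∀ f, P (T f) = T (P f))
    (hRT : ∀ f, R (T f) = T (R f))
    (H : 𝕳 →ₗ.[ℂ] 𝕳)
    (hdense : Dense (H.domain : Set 𝕳))
    (hsym : ∀ f : H.domain, ∃ hf : P (T (f : 𝕳)) ∈ H.domain,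
      P (T (H f)) = H ⟨P (T (f : 𝕳)), hf⟩)
    (α₁ α₂ α₃ : ℝ)
    (hsum : α₁ ^ 2 + α₂ ^ 2 + α₃ ^ 2 = 1)
    (hne : α₁ ^ 2 + α₃ ^ 2 ≠ 0)
    (J : 𝕳 →L[ℂ] 𝕳)
    (hJ : J = (α₁ : ℂ) • P + (α₂ : ℂ) • R + (α₃ : ℂ) • (Complex.I • (R ∘L P)))
    (hKrein : ∀ f : H.domain, ∃ hf : J (f : 𝕳) ∈ H.adjoint.domain,
      J (H f) = H.adjoint ⟨J (f : 𝕳), hf⟩)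
    (ξ : ℝ)
    (hcos : Real.cos ξ = α₁ / Real.sqrt (1 - α₂ ^ 2))
    (hsin : Real.sin ξ = α₃ / Real.sqrt (1 - α₂ ^ 2))
    (Pξ : 𝕳 →L[ℂ] 𝕳)
    (hPξ : Pξ = NormedSpace.exp ((Complex.I * (ξ : ℂ)) • R) ∘L P) :
    ∀ f : H.domain, ∃ hf : Pξ (f : 𝕳) ∈ H.adjoint.domain,
      Pξ (H f) = H.adjoint ⟨Pξ (f : 𝕳), hf⟩ := by
  set s := Real.sqrt (1 - α₂ ^ 2)
  have hs : s ≠ 0 := by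
    refine (Real.sqrt_pos.2 ?_).ne'
    rw [show 1 - α₂ ^ 2 = α₁ ^ 2 + α₃ ^ 2 by linarith]
    exact (by positivity : (0 : ℝ) ≤ _).lt_of_ne hne.symm
  have hα₁ : α₁ = s * Real.cos ξ := by rw [hcos]; field_simp
  have hα₃ : α₃ = s * Real.sin ξ := by rw [hsin]; field_simp
  set C : 𝕳 → 𝕳 := P ∘ T
  have hC2 (x : 𝕳) : C (C x) = x := by simp only [C, Function.comp_apply, hPT, hT2, hP2]
  have hCinner (u v : 𝕳) : ⟪C u, C v⟫_ℂ = ⟪v, u⟫_ℂ := by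
    simp only [C, Function.comp_apply, hPinner, hTinner]
  have hCH : LinearPMap.Intertwines C H H := hsym
  have hJH : LinearPMap.Intertwines J H H.adjoint := hKrein
  have hCJC : LinearPMap.Intertwines (C ∘ J ∘ C) H H.adjoint :=
    (hCH.comp hJH).comp (hCH.adjoint hC2 hCinner hdense hdense)
  have hPξ_eq : ⇑Pξ = (2 * s : ℂ)⁻¹ • (⇑J + C ∘ J ∘ C) := by
    have hRR : R * R = 1 := ContinuousLinearMap.ext hR2
    have hs' : (s : ℂ) ≠ 0 := Complex.ofReal_ne_zero.2 hs
    funext x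
    simp only [Pi.smul_apply, Pi.add_apply, Function.comp_apply, C, hPξ, hα₁, hα₃,
      add_PT_conj_apply_eq hP2 hanti hTadd hTsmul hT2 hPT hRT hJ, ContinuousLinearMap.comp_apply,
      NormedSpace.exp_I_mul_smul_of_mul_self_eq_one hRR, add_apply, smul_apply, one_apply_eq_self]
    match_scalars <;> field_simp
  rw [hPξ_eq]
  exact (hJH.add hCJC).const_smul _

/-- Lemma: reduction to the involution `𝒫_ξ`: if a closed densely defined
`𝒫𝒯`-symmetric operator `H` is self-adjoint in the Krein space attached to the involution
`J = α₁𝒫 + α₂ℛ + α₃ iℛ𝒫` (i.e. `JH ⊆ H*J`), then it is self-adjoint in the Krein space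
attached to `𝒫_ξ = exp(iξℛ)𝒫`, where `cos ξ = α₁/√(1-α₂²)` and `sin ξ = α₃/√(1-α₂²)`. -/
theorem krein_selfAdjoint_reduction_to_Pxi
    {𝕳 : Type*} [NormedAddCommGroup 𝕳] [InnerProductSpace ℂ 𝕳] [CompleteSpace 𝕳]
    (P R : 𝕳 →L[ℂ] 𝕳)
    (hP2 : ∀ f, P (P f) = f)
    (hPinner : ∀ f g : 𝕳, ⟪P f, P g⟫_ℂ = ⟪f, g⟫_ℂ)
    (hR2 : ∀ f, R (R f) = f)
    (hRinner : ∀ f g : 𝕳, ⟪R f, R g⟫_ℂ = ⟪f, g⟫_ℂ)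
    (hanti : P ∘L R = -(R ∘L P))
    (T : 𝕳 → 𝕳)
    (hTadd : ∀ f g, T (f + g) = T f + T g)
    (hTsmul : ∀ (c : ℂ) (f : 𝕳), T (c • f) = (starRingEnd ℂ c) • T f)
    (hT2 : ∀ f, T (T f) = f)
    (hTinner : ∀ f g : 𝕳, ⟪T f, T g⟫_ℂ = ⟪g, f⟫_ℂ)
    (hPT : ∀ f, P (T f) = T (P f))
    (hRT : ∀ f, R (T f) = T (R f))
    (H : 𝕳 →ₗ.[ℂ] 𝕳)
    (hdense : Dense (H.domain : Set 𝕳))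
    (hclosed : IsClosed (H.graph : Set (𝕳 × 𝕳)))
    (hsym : ∀ f : H.domain, ∃ hf : P (T (f : 𝕳)) ∈ H.domain,
      P (T (H f)) = H ⟨P (T (f : 𝕳)), hf⟩)
    (α₁ α₂ α₃ : ℝ)
    (hsum : α₁ ^ 2 + α₂ ^ 2 + α₃ ^ 2 = 1)
    (hne : α₁ ^ 2 + α₃ ^ 2 ≠ 0)
    (J : 𝕳 →L[ℂ] 𝕳)
    (hJ : J = (α₁ : ℂ) • P + (α₂ : ℂ) • R + (α₃ : ℂ) • (Complex.I • (R ∘L P)))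
    (hKrein : ∀ f : H.domain, ∃ hf : J (f : 𝕳) ∈ H.adjoint.domain,
      J (H f) = H.adjoint ⟨J (f : 𝕳), hf⟩)
    (ξ : ℝ) (hξ : ξ ∈ Set.Ico (0 : ℝ) (2 * π))
    (hcos : Real.cos ξ = α₁ / Real.sqrt (1 - α₂ ^ 2))
    (hsin : Real.sin ξ = α₃ / Real.sqrt (1 - α₂ ^ 2))
    (Pξ : 𝕳 →L[ℂ] 𝕳)
    (hPξ : Pξ = NormedSpace.exp ((Complex.I * (ξ : ℂ)) • R) ∘L P) :
    ∀ f : H.domain, ∃ hf : Pξ (f : 𝕳) ∈ H.adjoint.domain,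
      Pξ (H f) = H.adjoint ⟨Pξ (f : 𝕳), hf⟩ :=
  krein_selfAdjoint_reduction_to_Pxi_general P R hP2 hPinner hR2 hanti T hTadd hTsmul hT2 hTinner
    hPT hRT H hdense hsym α₁ α₂ α₃ hsum hne J hJ hKrein ξ hcos hsin Pξ hPξ
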